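/- In the resonant case (T flux-unitary with respect to the frozen-mode Gram matrix and T e₀ = ℓ e₀), the following conditions are equivalent: (i) [e₊, T e₁] ≠ 0; (ii) [e₊, T⁻¹ e₁] ≠ 0; (iii) T[span{e₊,e₀}] ≠ span{e₊,e₀}; (iv) T[span{e₀,e₁}] ≠ span{e₀,e₁}. -/

import Mathlib

/-! `T e₀ = ℓ e₀` with `ℓ ≠ 0` forces `T` to preserve `e₀^⊥ = span{e₊, e₀, e₁}`. There the form
only sees the `e₊`- and `e₁`-coordinates, on which it is `diag(1, -1)`, so the `(e₊, e₁)`-block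
`[[a, b], [c, d]]` of `T` lies in `U(1,1)` and its off-diagonal entries have `|b| = |c|`.
Conditions (i) and (iv) say `b ≠ 0`, conditions (ii) and (iii) say `c ≠ 0`. -/

open scoped ComplexConjugate

theorem Complex.eq_zero_iff_of_indefinite_unitary {a b c d : ℂ} (h₁ : conj a * a - conj c * c = 1)
    (h₂ : conj b * b - conj d * d = -1) (h₃ : conj a * b = conj c * d) : b = 0 ↔ c = 0 := by
  have h₃' : a * conj b = c * conj d := by simpa using congrArg conj h₃
  -- `|a|²|b|² = |c|²|d|²`, and `h₁`, `h₂` turn this into `(1 + |c|²)|b|² = |c|²(1 + |b|²)`.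
  have hbc : conj b * b = conj c * c := by
    linear_combination (a * conj b) * h₃ + (conj c * d) * h₃' - (conj b * b) * h₁ -
      (conj c * c) * h₂
  have conj_mul_self_eq_zero (z : ℂ) : conj z * z = 0 ↔ z = 0 := by simp
  rw [← conj_mul_self_eq_zero b, ← conj_mul_self_eq_zero c, hbc]

open Submodule in
theorem LinearEquiv.map_span_eq_self_iff {K V : Type*} [DivisionRing K] [AddCommGroup V]
    [Module K V] [FiniteDimensional K V] (T : V ≃ₗ[K] V) (s : Set V) :
    (span K s).map T.toLinearMap = span K s ↔ ∀ v ∈ s, T v ∈ span K s := by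
  refine ⟨fun h v hv ↦ h ▸ mem_map_of_mem (subset_span hv), fun h ↦ ?_⟩
  refine eq_of_le_of_finrank_eq ?_ (T.finrank_map_eq _)
  rw [map_span, span_le]
  rintro _ ⟨v, hv, rfl⟩
  exact h v hv

theorem Module.Basis.mem_span_pair_iff {R M ι : Type*} [Semiring R] [AddCommMonoid M] [Module R M]
    (e : Module.Basis ι R M) (i j : ι) (v : M) :
    v ∈ Submodule.span R {e i, e j} ↔ ∀ k, k ≠ i → k ≠ j → e.repr v k = 0 := by
  simp [← Set.image_pair, e.mem_span_image, Finsupp.support_subset_iff, not_or, and_imp]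

/-- Indices `0, 1, 2, 3` stand for `e₊, e₀, e₁, e₂`. -/
def frozenModeGram : Matrix (Fin 4) (Fin 4) ℂ :=
  !![1, 0, 0, 0; 0, 0, 0, -1; 0, 0, -1, 0; 0, -1, 0, 0]

namespace FrozenModeGram

variable {V : Type*} [AddCommGroup V] [Module ℂ V] {B : V →ₗ⋆[ℂ] V →ₗ[ℂ] ℂ}
  {e : Module.Basis (Fin 4) ℂ V}

theorem apply_eq (hG : ∀ i j, B (e i) (e j) = frozenModeGram i j) (x y : V) :
    B x y = conj (e.repr x 0) * e.repr y 0 - conj (e.repr x 1) * e.repr y 3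
      - conj (e.repr x 2) * e.repr y 2 - conj (e.repr x 3) * e.repr y 1 := by
  conv_lhs => rw [← Matrix.toLinearMapₛₗ₂_toMatrix₂ e e B]
  simp only [Matrix.toLinearMapₛₗ₂_apply, LinearMap.toMatrix₂_apply, hG, Fin.sum_univ_four]
  simp [frozenModeGram]
  ring

theorem apply_basis_zero_left (hG : ∀ i j, B (e i) (e j) = frozenModeGram i j) (y : V) :
    B (e 0) y = e.repr y 0 := by
  simp [apply_eq hG]

theorem apply_basis_one_right (hG : ∀ i j, B (e i) (e j) = frozenModeGram i j) (x : V) :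
    B x (e 1) = -conj (e.repr x 3) := by
  simp [apply_eq hG]

theorem apply_basis_two_right (hG : ∀ i j, B (e i) (e j) = frozenModeGram i j) (x : V) :
    B x (e 2) = -conj (e.repr x 2) := by
  simp [apply_eq hG]

theorem apply_of_repr_three_eq_zero (hG : ∀ i j, B (e i) (e j) = frozenModeGram i j) {x y : V}
    (hx : e.repr x 3 = 0) (hy : e.repr y 3 = 0) :
    B x y = conj (e.repr x 0) * e.repr y 0 - conj (e.repr x 2) * e.repr y 2 := by
  simp [apply_eq hG, hx, hy]

variable {T : V ≃ₗ[ℂ] V} {ℓ : ℂ}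

theorem repr_three_map_eq_zero (hG : ∀ i j, B (e i) (e j) = frozenModeGram i j)
    (hT : ∀ x y, B (T x) (T y) = B x y) (hℓ0 : ℓ ≠ 0) (hℓ : T (e 1) = ℓ • e 1) {x : V}
    (hx : e.repr x 3 = 0) : e.repr (T x) 3 = 0 := by
  have h := hT x (e 1)
  rw [hℓ, map_smul, apply_basis_one_right hG, apply_basis_one_right hG, hx] at h
  simpa [hℓ0] using h

theorem repr_zero_map_two_eq_zero_iff (hG : ∀ i j, B (e i) (e j) = frozenModeGram i j)
    (hT : ∀ x y, B (T x) (T y) = B x y) (hℓ0 : ℓ ≠ 0) (hℓ : T (e 1) = ℓ • e 1) :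
    e.repr (T (e 2)) 0 = 0 ↔ e.repr (T (e 0)) 2 = 0 := by
  have h0 := repr_three_map_eq_zero hG hT hℓ0 hℓ (x := e 0) (by simp)
  have h2 := repr_three_map_eq_zero hG hT hℓ0 hℓ (x := e 2) (by simp)
  have gram {i j : Fin 4} (hi : e.repr (T (e i)) 3 = 0) (hj : e.repr (T (e j)) 3 = 0) :
      conj (e.repr (T (e i)) 0) * e.repr (T (e j)) 0
        - conj (e.repr (T (e i)) 2) * e.repr (T (e j)) 2 = frozenModeGram i j := by
    rw [← hG, ← hT, apply_of_repr_three_eq_zero hG hi hj]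
  refine Complex.eq_zero_iff_of_indefinite_unitary (a := e.repr (T (e 0)) 0)
    (d := e.repr (T (e 2)) 2) ?_ ?_ ?_
  · simpa [frozenModeGram] using gram h0 h0
  · simpa [frozenModeGram] using gram h2 h2
  · simpa [frozenModeGram, sub_eq_zero] using gram h0 h2

theorem apply_basis_zero_symm_basis_two (hG : ∀ i j, B (e i) (e j) = frozenModeGram i j)
    (hT : ∀ x y, B (T x) (T y) = B x y) :
    B (e 0) (T.symm (e 2)) = -conj (e.repr (T (e 0)) 2) := by
  rw [← hT, T.apply_symm_apply, apply_basis_two_right hG]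

open Submodule

theorem map_span_zero_one_eq_iff (hG : ∀ i j, B (e i) (e j) = frozenModeGram i j)
    (hT : ∀ x y, B (T x) (T y) = B x y) (hℓ0 : ℓ ≠ 0) (hℓ : T (e 1) = ℓ • e 1) :
    (span ℂ {e 0, e 1}).map T.toLinearMap = span ℂ {e 0, e 1} ↔ e.repr (T (e 0)) 2 = 0 := by
  have := Module.Finite.of_basis e
  have h3 := repr_three_map_eq_zero hG hT hℓ0 hℓ (x := e 0) (by simp)
  have he1 : T (e 1) ∈ span ℂ {e 0, e 1} := hℓ ▸ smul_mem _ _ (subset_span (by simp))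
  simp only [T.map_span_eq_self_iff, Set.mem_insert_iff, Set.mem_singleton_iff, forall_eq_or_imp,
    forall_eq]
  rw [and_iff_left he1, e.mem_span_pair_iff]
  refine ⟨fun h ↦ h 2 (by decide) (by decide), fun h k hk0 hk1 ↦ ?_⟩
  fin_cases k <;> simp_all

theorem map_span_one_two_eq_iff (hG : ∀ i j, B (e i) (e j) = frozenModeGram i j)
    (hT : ∀ x y, B (T x) (T y) = B x y) (hℓ0 : ℓ ≠ 0) (hℓ : T (e 1) = ℓ • e 1) :
    (span ℂ {e 1, e 2}).map T.toLinearMap = span ℂ {e 1, e 2} ↔ e.repr (T (e 2)) 0 = 0 := by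
  have := Module.Finite.of_basis e
  have h3 := repr_three_map_eq_zero hG hT hℓ0 hℓ (x := e 2) (by simp)
  have he1 : T (e 1) ∈ span ℂ {e 1, e 2} := hℓ ▸ smul_mem _ _ (subset_span (by simp))
  simp only [T.map_span_eq_self_iff, Set.mem_insert_iff, Set.mem_singleton_iff, forall_eq_or_imp,
    forall_eq]
  rw [and_iff_right he1, e.mem_span_pair_iff]
  refine ⟨fun h ↦ h 0 (by decide) (by decide), fun h k hk1 hk2 ↦ ?_⟩
  fin_cases k <;> simp_all

end FrozenModeGram

open FrozenModeGram in
/-- In the resonant case (`T e₀ = ℓ e₀`, `ℓ ≠ 0`), the conditions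
`[e₊, T e₁] ≠ 0`, `[e₊, T⁻¹ e₁] ≠ 0`, `T[span{e₊,e₀}] ≠ span{e₊,e₀}`, and
`T[span{e₀,e₁}] ≠ span{e₀,e₁}` are equivalent.  Basis convention:
`e 0 = e₊`, `e 1 = e₀`, `e 2 = e₁`, `e 3 = e₂`. -/
theorem stmt_13
    (B : (Fin 4 → ℂ) → (Fin 4 → ℂ) → ℂ)
    (hadd₁ : ∀ x y z, B (x + y) z = B x z + B y z)
    (hadd₂ : ∀ x y z, B x (y + z) = B x y + B x z)
    (hsmul₁ : ∀ (c : ℂ) (x y), B (c • x) y = conj c * B x y)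
    (hsmul₂ : ∀ (c : ℂ) (x y), B x (c • y) = c * B x y)
    (e : Module.Basis (Fin 4) ℂ (Fin 4 → ℂ))
    (hG : ∀ i j, B (e i) (e j) =
      !![(1:ℂ),0,0,0; 0,0,0,-1; 0,0,-1,0; 0,-1,0,0] i j)
    (T : (Fin 4 → ℂ) ≃ₗ[ℂ] (Fin 4 → ℂ))
    (hT : ∀ x y, B (T x) (T y) = B x y)
    (ℓ : ℂ) (hℓ0 : ℓ ≠ 0) (hℓ : T (e 1) = ℓ • e 1) :
    [B (e 0) (T (e 2)) ≠ 0,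
     B (e 0) (T.symm (e 2)) ≠ 0,
     (Submodule.span ℂ ({e 0, e 1} : Set (Fin 4 → ℂ))).map T.toLinearMap
       ≠ Submodule.span ℂ ({e 0, e 1} : Set (Fin 4 → ℂ)),
     (Submodule.span ℂ ({e 1, e 2} : Set (Fin 4 → ℂ))).map T.toLinearMap
       ≠ Submodule.span ℂ ({e 1, e 2} : Set (Fin 4 → ℂ))].TFAE := by
  let F : (Fin 4 → ℂ) →ₗ⋆[ℂ] (Fin 4 → ℂ) →ₗ[ℂ] ℂ :=
    LinearMap.mk₂'ₛₗ _ _ B hadd₁ hsmul₁ hadd₂ hsmul₂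
  have hF : ∀ i j, F (e i) (e j) = frozenModeGram i j := hG
  have hFT : ∀ x y, F (T x) (T y) = F x y := hT
  have hi : B (e 0) (T (e 2)) = e.repr (T (e 2)) 0 := apply_basis_zero_left hF _
  have hii : B (e 0) (T.symm (e 2)) = -conj (e.repr (T (e 0)) 2) :=
    apply_basis_zero_symm_basis_two hF hFT
  simp only [hi, hii, ne_eq]
  rw [map_span_zero_one_eq_iff hF hFT hℓ0 hℓ,
    map_span_one_two_eq_iff hF hFT hℓ0 hℓ, repr_zero_map_two_eq_zero_iff hF hFT hℓ0 hℓ]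
  simp [List.tfae_cons_self]
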